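/- Let α, β, γ, δ be positive integers with α > γ, and A = α·δ + β·γ. Then the vector (α-γ, -(β+δ)) lies in the lattice generated by (α,-β) and (γ,δ); moreover, for every integer x with 0 < x < β+δ, the vector (α-γ, -(β+δ)+x) does not lie in that lattice. -/

import Mathlib

/-! Subtracting the lattice vector `(α, -β) - (γ, δ) = (α - γ, -(β + δ))` reduces the claim to
the vertical lattice vectors `(0, x) = p (α, -β) + q (γ, δ)`. Since `α, γ > 0`, the relation
`p α + q γ = 0` forces `p` and `q` to have opposite signs (or both vanish), so `x = -p β + q δ`
is `0` or at least `β + δ` in absolute value. -/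

theorem add_le_of_mul_add_mul_eq_zero {α β γ δ p q : ℤ} (hα : 0 < α) (hβ : 0 < β) (hγ : 0 < γ)
    (hδ : 0 < δ) (hpq : p * α + q * γ = 0) (hpos : 0 < -p * β + q * δ) :
    β + δ ≤ -p * β + q * δ := by
  have hp : p < 0 := by
    by_contra! hp
    have hq : q ≤ 0 := by nlinarith
    nlinarith
  have hq : 0 < q := by nlinarith
  nlinarith

theorem alpha_gamma_lemma_a_general (α β γ δ : ℤ) (hα : 0 < α) (hβ : 0 < β) (hγ : 0 < γ) (hδ : 0 < δ) :
    (∃ m n : ℤ, ((α - γ : ℤ), -(β + δ)) = (m * α + n * γ, m * (-β) + n * δ)) ∧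
    (∀ x : ℤ, 0 < x → x < β + δ →
      ¬ ∃ m n : ℤ, ((α - γ : ℤ), -(β + δ) + x) = (m * α + n * γ, m * (-β) + n * δ)) := by
  refine ⟨⟨1, -1, Prod.ext (by ring) (by ring)⟩, ?_⟩
  rintro x hx hxlt ⟨m, n, h⟩
  obtain ⟨h₁, h₂⟩ := Prod.mk.inj h
  have hvert : (m - 1) * α + (n + 1) * γ = 0 := by linarith
  have hx_eq : x = -(m - 1) * β + (n + 1) * δ := by linarith
  have := add_le_of_mul_add_mul_eq_zero hα hβ hγ hδ hvert (hx_eq ▸ hx)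
  linarith

theorem alpha_gamma_lemma_a (α β γ δ A : ℤ) (hα : 0 < α) (hβ : 0 < β) (hγ : 0 < γ) (hδ : 0 < δ)
    (hag : α > γ) (hA : A = α * δ + β * γ) :
    (∃ m n : ℤ, ((α - γ : ℤ), -(β + δ)) = (m * α + n * γ, m * (-β) + n * δ)) ∧
    (∀ x : ℤ, 0 < x → x < β + δ →
      ¬ ∃ m n : ℤ, ((α - γ : ℤ), -(β + δ) + x) = (m * α + n * γ, m * (-β) + n * δ)) :=
  alpha_gamma_lemma_a_general α β γ δ hα hβ hγ hδ
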